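/- Under the fixed-point equations w = u - ηS_W(u - w⋆) and u = w - ηS_U(w - u⋆), with H := (S - ηS_U S_W)^{-1} S_U (assumed invertible) and Δ := u⋆ - w⋆, the residuals satisfy u - u⋆ = -(I - H)Δ and w - w⋆ = (I - ηS_W) H Δ. -/
import Mathlib


open Matrix

/-- Under the fixed-point equations, with `H = (S - ηS_U S_W)⁻¹ S_U`
and `Δ = u⋆ - w⋆`, the residuals satisfy `u - u⋆ = -(I - H)Δ` and
`w - w⋆ = (I - ηS_W) H Δ`. -/
theorem stmt_4 {d : ℕ} (SW SU : Matrix (Fin d) (Fin d) ℝ)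
    (hSW : SW.PosSemidef) (hSU : SU.PosSemidef) (η : ℝ) (hη : 0 < η)
    (hinv : IsUnit (SW + SU - η • (SU * SW)))
    (wstar ustar w u : Fin d → ℝ)
    (hw : w = u - η • SW.mulVec (u - wstar))
    (hu : u = w - η • SU.mulVec (w - ustar)) :
    u - ustar = -(((1 : Matrix (Fin d) (Fin d) ℝ) -
        (SW + SU - η • (SU * SW))⁻¹ * SU).mulVec (ustar - wstar)) ∧
    w - wstar = (((1 : Matrix (Fin d) (Fin d) ℝ) - η • SW) *
        ((SW + SU - η • (SU * SW))⁻¹ * SU)).mulVec (ustar - wstar) := by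
  set M := SW + SU - η • (SU * SW) with hM
  set x := u - wstar with hx
  set Δ := ustar - wstar with hΔ
  clear_value x Δ
  have e1 : η • SW.mulVec x = u - w := by rw [hw]; module
  have e2 : η • SU.mulVec (w - ustar) = w - u := by rw [hu]; module
  have h0 : SW.mulVec x + SU.mulVec (w - ustar) = 0 := by
    have h1 : η • (SW.mulVec x + SU.mulVec (w - ustar)) = 0 := by
      rw [smul_add]; linear_combination (norm := module) e1 + e2
    have := congrArg (fun v => η⁻¹ • v) h1
    simpa [smul_smul, inv_mul_cancel₀ hη.ne'] using this
  have hwu : w - ustar = x - Δ - η • SW.mulVec x := by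
    rw [hw, hx, hΔ]; module
  have key : M.mulVec x = SU.mulVec Δ := by
    rw [hM, Matrix.sub_mulVec, Matrix.add_mulVec, Matrix.smul_mulVec,
      ← Matrix.mulVec_mulVec]
    have h2 := h0
    rw [hwu, Matrix.mulVec_sub, Matrix.mulVec_sub, Matrix.mulVec_smul] at h2
    linear_combination (norm := module) h2
  have hdet : IsUnit M.det := (Matrix.isUnit_iff_isUnit_det M).mp hinv
  have hxval : (M⁻¹ * SU).mulVec Δ = x := by
    rw [← Matrix.mulVec_mulVec, ← key, Matrix.mulVec_mulVec,
      Matrix.nonsing_inv_mul M hdet, Matrix.one_mulVec]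
  constructor
  · rw [Matrix.sub_mulVec, Matrix.one_mulVec, hxval, hx, hΔ]; module
  · rw [← Matrix.mulVec_mulVec, hxval, Matrix.sub_mulVec, Matrix.one_mulVec,
      Matrix.smul_mulVec, hw, hx]
    module
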